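/- The linear map ψ from the filiform Lie algebra R_n to gl(n,ℂ) defined by ψ(e_1) = ∑_{i=1}^{n-2} E_{i,i+1}, ψ(e_2) = ∑_{i=1}^{n-3} E_{i,i+2} + E_{n-1,n}, and ψ(e_i) = E_{n+1-i,n} for 3 ≤ i ≤ n, is an injective Lie algebra homomorphism into the strictly upper-triangular n × n matrices. -/

import Mathlib

/-- Structure constants of the filiform Lie algebra `R_n`:
`[e_1,e_i] = -[e_i,e_1] = e_{i+1}` for `2 ≤ i ≤ n-1` and
`[e_2,e_i] = -[e_i,e_2] = e_{i+2}` for `3 ≤ i ≤ n-2`. -/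
noncomputable def cR (n i j k : ℕ) : ℂ :=
  (if i = 1 ∧ 2 ≤ j ∧ j ≤ n - 1 ∧ k = j + 1 then 1 else 0)
  - (if j = 1 ∧ 2 ≤ i ∧ i ≤ n - 1 ∧ k = i + 1 then 1 else 0)
  + (if i = 2 ∧ 3 ≤ j ∧ j ≤ n - 2 ∧ k = j + 2 then 1 else 0)
  - (if j = 2 ∧ 3 ≤ i ∧ i ≤ n - 2 ∧ k = i + 2 then 1 else 0)
/-- The elementary `N × N` matrix with `1` in (1-based) position `(i,j)`. -/
noncomputable def elemMat (N : ℕ) (i j : ℕ) : Matrix (Fin N) (Fin N) ℂ :=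
  Matrix.of fun a b => if (a : ℕ) + 1 = i ∧ (b : ℕ) + 1 = j then 1 else 0

/-- The matrices representing the basis of `R_n`:
`ψ(e_1) = ∑_{i=1}^{n-2} E_{i,i+1}`, `ψ(e_2) = ∑_{i=1}^{n-3} E_{i,i+2} + E_{n-1,n}`,
`ψ(e_i) = E_{n+1-i,n}` for `3 ≤ i ≤ n`. -/
noncomputable def MR (n i : ℕ) : Matrix (Fin n) (Fin n) ℂ :=
  if i = 1 then ∑ k ∈ Finset.Icc 1 (n - 2), elemMat n k (k + 1)
  else if i = 2 then
    (∑ k ∈ Finset.Icc 1 (n - 3), elemMat n k (k + 2)) + elemMat n (n - 1) n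
  else elemMat n (n + 1 - i) n

/-!
`ψ(e_1)` and the `E_{k,k+2}` part of `ψ(e_2)` are shifts along the first and second
superdiagonals, both stopping at column `n - 1`, while `ψ(e_i) = E_{n+1-i,n}` for `i ≥ 3` span
the last column (above its two lowest entries). Left multiplication by a shift moves a
last-column matrix up, right multiplication by a shift kills it, and two last-column matrices
multiply to zero; the two shifts commute, so `[ψ(e_1), ψ(e_2)]` only sees the extra entry
`E_{n-1,n}`. Injectivity holds because each `ψ(e_i)` has an entry at which all the other basis
matrices vanish.
-/

open Finset

section ElemMat

variable {N : ℕ}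

theorem elemMat_apply (i j : ℕ) (a b : Fin N) :
    elemMat N i j a b = if (a : ℕ) + 1 = i ∧ (b : ℕ) + 1 = j then 1 else 0 :=
  rfl

theorem elemMat_mul_elemMat (i j k l : ℕ) :
    elemMat N i j * elemMat N k l = if j = k ∧ 1 ≤ j ∧ j ≤ N then elemMat N i l else 0 := by
  ext a b
  rw [Matrix.mul_apply]
  split_ifs with h
  · obtain ⟨rfl, hj1, hjN⟩ := h
    rw [Finset.sum_eq_single ⟨j - 1, by omega⟩]
    · simp only [elemMat_apply]
      split_ifs <;> simp_all
    · intro c _ hc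
      have : (c : ℕ) + 1 ≠ j := fun h => hc (Fin.ext (by simp; omega))
      simp [elemMat_apply, this]
    · simp
  · refine Finset.sum_eq_zero fun c _ => ?_
    simp only [elemMat_apply]
    split_ifs <;> first | omega | simp

noncomputable def superdiag (N d m : ℕ) : Matrix (Fin N) (Fin N) ℂ :=
  ∑ k ∈ Icc 1 m, elemMat N k (k + d)

theorem superdiag_apply (d m : ℕ) (a b : Fin N) :
    superdiag N d m a b = if (b : ℕ) = a + d ∧ (a : ℕ) < m then 1 else 0 := by
  simp only [superdiag, Matrix.sum_apply, elemMat_apply]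
  rw [Finset.sum_congr rfl fun k _ => show _ = if (a : ℕ) + 1 = k then
      (if (b : ℕ) = a + d then (1 : ℂ) else 0) else 0 by
    split_ifs <;> first | rfl | (exfalso; omega)]
  rw [Finset.sum_ite_eq]
  simp only [mem_Icc]
  split_ifs <;> first | rfl | (exfalso; omega)

theorem superdiag_mul_elemMat {d m : ℕ} (h : m + d ≤ N) (r l : ℕ) :
    superdiag N d m * elemMat N r l = if d < r ∧ r ≤ m + d then elemMat N (r - d) l else 0 := by
  rw [superdiag, Finset.sum_mul]
  simp only [elemMat_mul_elemMat]
  split_ifs with hr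
  · rw [Finset.sum_eq_single (r - d)]
    · rw [if_pos (by omega)]
    · intro k _ hk
      rw [if_neg (by omega)]
    · intro h; simp at h; omega
  · refine Finset.sum_eq_zero fun k hk => ?_
    simp only [mem_Icc] at hk
    rw [if_neg (by omega)]

theorem elemMat_mul_superdiag {d m : ℕ} (h : m ≤ N) (r l : ℕ) :
    elemMat N r l * superdiag N d m = if 1 ≤ l ∧ l ≤ m then elemMat N r (l + d) else 0 := by
  rw [superdiag, Finset.mul_sum]
  simp only [elemMat_mul_elemMat]
  split_ifs with hl
  · rw [Finset.sum_eq_single l]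
    · rw [if_pos (by omega)]
    · intro k _ hk
      rw [if_neg (by omega)]
    · intro h; simp at h; omega
  · refine Finset.sum_eq_zero fun k hk => ?_
    simp only [mem_Icc] at hk
    rw [if_neg (by omega)]

theorem superdiag_mul_superdiag {d e m m' : ℕ} (h : m' ≤ N) :
    superdiag N d m * superdiag N e m' = superdiag N (d + e) (min m (m' - d)) := by
  rw [superdiag, Finset.sum_mul]
  simp only [elemMat_mul_superdiag h, add_assoc]
  rw [← Finset.sum_filter, superdiag]
  congr 1
  ext k
  simp only [mem_filter, mem_Icc]
  omega

end ElemMat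

section StructureConstants

variable {M : Type*} [AddCommGroup M] [Module ℂ M]

theorem sum_Icc_ite_and_eq_smul (n m : ℕ) (P : Prop) [Decidable P] (hm : P → m ∈ Icc 1 n)
    (v : ℕ → M) :
    ∑ k ∈ Icc 1 n, (if P ∧ k = m then (1 : ℂ) else 0) • v k = if P then v m else 0 := by
  simp only [ite_and, ite_smul, one_smul, zero_smul]
  split_ifs with hP
  · rw [Finset.sum_ite_eq', if_pos (hm hP)]
  · exact Finset.sum_const_zero

theorem sum_cR_smul (n i j : ℕ) (v : ℕ → M) :
    ∑ k ∈ Icc 1 n, cR n i j k • v k =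
      (if i = 1 ∧ 2 ≤ j ∧ j ≤ n - 1 then v (j + 1) else 0)
      - (if j = 1 ∧ 2 ≤ i ∧ i ≤ n - 1 then v (i + 1) else 0)
      + (if i = 2 ∧ 3 ≤ j ∧ j ≤ n - 2 then v (j + 2) else 0)
      - (if j = 2 ∧ 3 ≤ i ∧ i ≤ n - 2 then v (i + 2) else 0) := by
  simp only [cR, add_smul, sub_smul, sum_add_distrib, sum_sub_distrib, ← and_assoc]
  rw [sum_Icc_ite_and_eq_smul, sum_Icc_ite_and_eq_smul, sum_Icc_ite_and_eq_smul,
    sum_Icc_ite_and_eq_smul] <;> simp only [mem_Icc] <;> omega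

end StructureConstants

theorem sum_smul_injective_of_exists_apply_eq_ite {ι κ κ' R : Type*} [Fintype ι] [DecidableEq ι]
    [Semiring R] (v : ι → Matrix κ κ' R)
    (hv : ∀ x, ∃ a b, ∀ i, v i a b = if i = x then 1 else 0) :
    Function.Injective fun f : ι → R => ∑ i, f i • v i := by
  intro f g hfg
  funext x
  obtain ⟨a, b, hab⟩ := hv x
  simpa [Matrix.sum_apply, hab] using congrFun (congrFun hfg a) b

section MR

variable {n : ℕ}

theorem MR_one : MR n 1 = superdiag n 1 (n - 2) := rfl

theorem MR_two : MR n 2 = superdiag n 2 (n - 3) + elemMat n (n - 1) n := rfl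

theorem MR_of_ne {i : ℕ} (h1 : i ≠ 1) (h2 : i ≠ 2) : MR n i = elemMat n (n + 1 - i) n := by
  rw [MR, if_neg h1, if_neg h2]

theorem MR_one_mul_MR {j : ℕ} (hj : 3 ≤ j) (hjn : j ≤ n) :
    MR n 1 * MR n j = if j ≤ n - 1 then MR n (j + 1) else 0 := by
  rw [MR_one, MR_of_ne (by omega) (by omega), superdiag_mul_elemMat (by omega),
    MR_of_ne (by omega) (by omega)]
  exact if_congr (by omega) (congrArg (elemMat n · n) (by omega)) rfl

theorem MR_mul_MR_one {j : ℕ} (hj : 3 ≤ j) : MR n j * MR n 1 = 0 := by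
  rw [MR_one, MR_of_ne (by omega) (by omega), elemMat_mul_superdiag (by omega),
    if_neg (by omega)]

theorem MR_two_mul_MR {j : ℕ} (hj : 3 ≤ j) (hjn : j ≤ n) :
    MR n 2 * MR n j = if j ≤ n - 2 then MR n (j + 2) else 0 := by
  rw [MR_two, MR_of_ne (by omega) (by omega), add_mul, superdiag_mul_elemMat (by omega),
    elemMat_mul_elemMat, if_neg (show ¬(n = n + 1 - j ∧ _) by omega), add_zero,
    MR_of_ne (by omega) (by omega)]
  exact if_congr (by omega) (congrArg (elemMat n · n) (by omega)) rfl

theorem MR_mul_MR_two {j : ℕ} (hj : 3 ≤ j) : MR n j * MR n 2 = 0 := by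
  rw [MR_two, MR_of_ne (by omega) (by omega), mul_add, elemMat_mul_superdiag (by omega),
    elemMat_mul_elemMat, if_neg (by omega), if_neg (by omega), add_zero]

theorem MR_mul_MR {i j : ℕ} (hi : 3 ≤ i) (hj : 3 ≤ j) (hjn : j ≤ n) : MR n i * MR n j = 0 := by
  rw [MR_of_ne (by omega) (by omega), MR_of_ne (by omega) (by omega), elemMat_mul_elemMat,
    if_neg (by omega)]

theorem MR_one_lie_MR_two (hn : 3 ≤ n) : MR n 1 * MR n 2 - MR n 2 * MR n 1 = MR n 3 := by
  have hcomm : superdiag n 1 (n - 2) * superdiag n 2 (n - 3)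
      = superdiag n 2 (n - 3) * superdiag n 1 (n - 2) := by
    rw [superdiag_mul_superdiag (by omega), superdiag_mul_superdiag (by omega)]
    congr 1; omega
  rw [MR_one, MR_two, mul_add, add_mul, hcomm, superdiag_mul_elemMat (by omega),
    elemMat_mul_superdiag (by omega), if_pos (by omega), if_neg (by omega),
    MR_of_ne (by omega) (by omega), show n - 1 - 1 = n + 1 - 3 by omega]
  abel

theorem sum_cR_smul_MR {i j : ℕ} (hn : 3 ≤ n) (hi : i ∈ Icc 1 n) (hj : j ∈ Icc 1 n) :
    ∑ k ∈ Icc 1 n, cR n i j k • MR n k = MR n i * MR n j - MR n j * MR n i := by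
  rw [mem_Icc] at hi hj
  rw [sum_cR_smul]
  obtain rfl | rfl | hi3 : i = 1 ∨ i = 2 ∨ 3 ≤ i := by omega
  all_goals obtain rfl | rfl | hj3 : j = 1 ∨ j = 2 ∨ 3 ≤ j := by omega
  all_goals simp (disch := omega) only [MR_one_mul_MR, MR_mul_MR_one, MR_two_mul_MR, MR_mul_MR_two,
    MR_mul_MR, MR_one_lie_MR_two hn, ← neg_sub (MR n 1 * MR n 2), true_and]
  all_goals split_ifs <;> first | omega | simp

theorem MR_apply_eq_zero_of_le (i : ℕ) {a b : Fin n} (h : (b : ℕ) ≤ a) :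
    MR n i a b = 0 := by
  obtain rfl | rfl | ⟨hi1, hi2⟩ : i = 1 ∨ i = 2 ∨ (i ≠ 1 ∧ i ≠ 2) := by omega
  · rw [MR_one, superdiag_apply, if_neg (by omega)]
  · rw [MR_two, Matrix.add_apply, superdiag_apply, elemMat_apply, if_neg (by omega),
      if_neg (by omega), add_zero]
  · rw [MR_of_ne hi1 hi2, elemMat_apply, if_neg (by omega)]

theorem exists_apply_MR_succ_eq_ite (hn : 3 ≤ n) (x : Fin n) :
    ∃ a b : Fin n, ∀ i : Fin n, MR n (i + 1) a b = if i = x then 1 else 0 := by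
  have hx := x.isLt
  -- 0-based pivots: `E_{1,2}` for `ψ(e_1)` and `E_{n-x,n}` for `ψ(e_{x+1})`, `x ≥ 1`
  obtain ⟨a, b, hab⟩ : ∃ a b : Fin n, ((x : ℕ) = 0 ∧ (a : ℕ) = 0 ∧ (b : ℕ) = 1) ∨
      ((x : ℕ) ≠ 0 ∧ (a : ℕ) = n - 1 - x ∧ (b : ℕ) = n - 1) := by
    by_cases hx0 : (x : ℕ) = 0
    · exact ⟨⟨0, by omega⟩, ⟨1, by omega⟩, .inl ⟨hx0, rfl, rfl⟩⟩
    · exact ⟨⟨n - 1 - x, by omega⟩, ⟨n - 1, by omega⟩, .inr ⟨hx0, rfl, rfl⟩⟩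
  refine ⟨a, b, fun i => ?_⟩
  have hi := i.isLt
  obtain h0 | h1 | ⟨h0, h1⟩ : (i : ℕ) = 0 ∨ (i : ℕ) = 1 ∨ ((i : ℕ) ≠ 0 ∧ (i : ℕ) ≠ 1) := by omega
  · rw [h0, zero_add, MR_one, superdiag_apply]
    exact if_congr (by rw [Fin.ext_iff]; omega) rfl rfl
  · rw [h1, MR_two, Matrix.add_apply, superdiag_apply, elemMat_apply, if_neg (by omega), zero_add]
    exact if_congr (by rw [Fin.ext_iff]; omega) rfl rfl
  · rw [MR_of_ne (by omega) (by omega), elemMat_apply]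
    exact if_congr (by rw [Fin.ext_iff]; omega) rfl rfl

end MR

/-- The map `ψ` sending `e_i` to `MR n i`, extended linearly, is an injective
Lie algebra homomorphism from `R_n` into the strictly upper-triangular `n × n`
complex matrices. -/
theorem Rn_minimal_representation (n : ℕ) (hn : 5 ≤ n) :
    (∀ i ∈ Finset.Icc 1 n, ∀ j ∈ Finset.Icc 1 n,
      ∑ k ∈ Finset.Icc 1 n, cR n i j k • MR n k
        = MR n i * MR n j - MR n j * MR n i) ∧
    Function.Injective
      (fun f : Fin n → ℂ => ∑ i : Fin n, f i • MR n ((i : ℕ) + 1)) ∧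
    (∀ i ∈ Finset.Icc 1 n, ∀ a b : Fin n, (b : ℕ) ≤ (a : ℕ) → MR n i a b = 0) :=
  ⟨fun _ hi _ hj => sum_cR_smul_MR (by omega) hi hj,
    sum_smul_injective_of_exists_apply_eq_ite _ (exists_apply_MR_succ_eq_ite (by omega)),
    fun i _ _ _ h => MR_apply_eq_zero_of_le i h⟩
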